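/- Let X be a metrizable topological space. Then X is Polish (separable and completely metrizable) if and only if X is weakly homeomorphic to a Polish space. -/

import Mathlib

open Set Function Topology

/-- A map `f : X → Y` is weakly discontinuous if every nonempty subset `A ⊆ X`
contains a nonempty subset `U`, open in the subspace topology of `A`, on which
`f` restricts to a continuous map. -/
def WeaklyDiscontinuous {X Y : Type*} [TopologicalSpace X] [TopologicalSpace Y]
    (f : X → Y) : Prop :=
  ∀ A : Set X, A.Nonempty → ∃ U : Set X, U ⊆ A ∧ U.Nonempty ∧
    (∃ V : Set X, IsOpen V ∧ U = A ∩ V) ∧ ContinuousOn f U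

/-- Topological spaces `X` and `Y` are weakly homeomorphic if there is a bijection
`f : X → Y` such that both `f` and its inverse are weakly discontinuous. -/
def WeaklyHomeomorphic (X : Type*) (Y : Type*) [TopologicalSpace X] [TopologicalSpace Y] :
    Prop :=
  ∃ (f : X → Y) (g : Y → X), Function.LeftInverse g f ∧ Function.RightInverse g f ∧
    WeaklyDiscontinuous f ∧ WeaklyDiscontinuous g

universe u

/-!
A weakly discontinuous map on a second-countable space is continuous on each layer
`W o \ ⋃ o' < o, W o'` of an ordinal-indexed family of open sets covering the space; only
countably many layers are nonempty, since each contains its own basic open set. Applied to the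
inverse of the weak homeomorphism `σ : X → Y` (together with `σ` on the images) this makes `X`
separable, so `X` embeds in the Polish completion `M` of a compatible metric. Refining the layers
of `X` by the preimages of those of `Y`, every piece is homeomorphic through `σ⁻¹` to a Gδ subset
of `Y`, hence Polish, hence Gδ in `M`. Finally
`C ∩ ⋃ W = ⋃ W ∩ ⋂ᵢ ((layer W i)ᶜ ∪ (C ∩ layer W i))` shows that a set whose traces on the
layers of an open family are Gδ is itself Gδ, so `X` is Gδ in `M`, hence Polish.
-/

open TopologicalSpace Filter

/-- For open `W i`, the layers are the pieces of a transfinite decomposition, each relatively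
open in the remainder `(⋃ j < i, W j)ᶜ`. -/
def layer {ι α : Type*} [LT ι] (W : ι → Set α) (i : ι) : Set α :=
  W i \ ⋃ j < i, W j

section Layer

variable {ι α β : Type*}

theorem preimage_layer [LT ι] (f : β → α) (W : ι → Set α) (i : ι) :
    f ⁻¹' layer W i = layer (fun j => f ⁻¹' W j) i := by
  simp only [layer, preimage_sdiff, preimage_iUnion]

theorem inter_layer_congr [LT ι] {A : Set α} {V W : ι → Set α} (h : ∀ i, A ∩ V i = A ∩ W i)
    (i : ι) : A ∩ layer V i = A ∩ layer W i := by
  have hmem : ∀ x ∈ A, ∀ j, x ∈ V j ↔ x ∈ W j := fun x hx j =>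
    ⟨fun hV => ((h j).subset ⟨hx, hV⟩).2, fun hW => ((h j).superset ⟨hx, hW⟩).2⟩
  ext x
  simp only [layer, mem_inter_iff, Set.mem_sdiff, mem_iUnion₂]
  constructor
  · rintro ⟨hx, hV, hnot⟩
    exact ⟨hx, (hmem x hx i).1 hV, fun ⟨j, hj, hW⟩ => hnot ⟨j, hj, (hmem x hx j).2 hW⟩⟩
  · rintro ⟨hx, hW, hnot⟩
    exact ⟨hx, (hmem x hx i).2 hW, fun ⟨j, hj, hV⟩ => hnot ⟨j, hj, (hmem x hx j).1 hV⟩⟩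

theorem disjoint_layer_of_lt [LT ι] (W : ι → Set α) {i j : ι} (hij : i < j) :
    Disjoint (W i) (layer W j) :=
  disjoint_left.2 fun _ hx hlayer => hlayer.2 (mem_biUnion hij hx)

theorem iUnion_layer [LT ι] [WellFoundedLT ι] (W : ι → Set α) :
    ⋃ i, layer W i = ⋃ i, W i := by
  refine (iUnion_mono fun i => sdiff_subset).antisymm (iUnion_subset fun i x hx => ?_)
  obtain ⟨j, hj, hmin⟩ := wellFounded_lt.has_min {j | x ∈ W j} ⟨i, hx⟩
  exact mem_iUnion.2 ⟨j, hj, fun hlt => by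
    obtain ⟨k, hk, hxk⟩ := mem_iUnion₂.1 hlt
    exact hmin k hxk hk⟩

variable [TopologicalSpace α]

theorem isGδ_layer [LT ι] [PerfectlyNormalSpace α] {W : ι → Set α} (hW : ∀ i, IsOpen (W i))
    (i : ι) : IsGδ (layer W i) :=
  (hW i).isGδ.inter (isOpen_biUnion fun j _ => hW j).isClosed_compl.isGδ

theorem isGδ_compl_layer [LT ι] [PerfectlyNormalSpace α] {W : ι → Set α}
    (hW : ∀ i, IsOpen (W i)) (i : ι) : IsGδ (layer W i)ᶜ := by
  rw [layer, compl_sdiff]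
  exact (isOpen_biUnion fun j _ => hW j).isGδ.union (hW i).isClosed_compl.isGδ

-- Each nonempty layer contains a basic open set, and later layers avoid it.
theorem countable_setOf_nonempty_layer [LinearOrder ι] [SecondCountableTopology α]
    {W : ι → Set α} (hW : ∀ i, IsOpen (W i)) : {i | (layer W i).Nonempty}.Countable := by
  have hbasis : ∀ i : {i | (layer W i).Nonempty},
      ∃ b : countableBasis α, (↑b ∩ layer W i).Nonempty ∧ ↑b ⊆ W i := by
    rintro ⟨i, x, hx⟩
    obtain ⟨b, hb, hxb, hbW⟩ :=
      (isBasis_countableBasis α).exists_subset_of_mem_open hx.1 (hW i)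
    exact ⟨⟨b, hb⟩, ⟨x, hxb, hx⟩, hbW⟩
  choose b hb_ne hb_sub using hbasis
  have hne : ∀ i j, i < j → b i ≠ b j := fun i j hij hb =>
    (hb_ne j).ne_empty <| (disjoint_layer_of_lt W hij).mono_left
      (hb ▸ hb_sub i : (b j : Set α) ⊆ W i) |>.inter_eq
  have : Countable (countableBasis α) := (countable_countableBasis α).to_subtype
  refine countable_coe_iff.1 (Injective.countable (f := b) fun i j hij => ?_)
  by_contra hij'
  rcases lt_or_gt_of_ne hij' with h | h
  exacts [hne i j h hij, hne j i h hij.symm]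

end Layer

section GDelta

variable {X Y M : Type*} [TopologicalSpace X] [TopologicalSpace Y] [TopologicalSpace M]

theorem isGδ_inter_iUnion_of_isGδ_inter_layer {ι : Type*} [LinearOrder ι] [WellFoundedLT ι]
    [SecondCountableTopology M] [PerfectlyNormalSpace M] {W : ι → Set M}
    (hW : ∀ i, IsOpen (W i)) {C : Set M} (hC : ∀ i, IsGδ (C ∩ layer W i)) :
    IsGδ (C ∩ ⋃ i, W i) := by
  have hS := countable_setOf_nonempty_layer hW
  have hC_eq : C ∩ ⋃ i, W i =
      (⋃ i, W i) ∩ ⋂ i ∈ {i | (layer W i).Nonempty}, ((layer W i)ᶜ ∪ (C ∩ layer W i)) := by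
    ext x
    simp only [mem_inter_iff, mem_iInter, mem_union, mem_compl_iff]
    refine ⟨fun ⟨hxC, hxW⟩ => ⟨hxW, fun i _ => or_iff_not_imp_left.2 fun hx =>
      ⟨hxC, not_not.1 hx⟩⟩, fun ⟨hxW, hx⟩ => ⟨?_, hxW⟩⟩
    obtain ⟨i, hi⟩ := mem_iUnion.1 ((iUnion_layer W).symm ▸ hxW)
    exact ((hx i ⟨x, hi⟩).resolve_left (not_not.2 hi)).1
  rw [hC_eq]
  exact (isOpen_iUnion hW).isGδ.inter
    (.biInter hS fun i _ => (isGδ_compl_layer hW i).union (hC i))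

theorem isGδ_image_of_isGδ_image_inter_preimage_layer {ι : Type*} [LinearOrder ι]
    [WellFoundedLT ι] [SecondCountableTopology M] [PerfectlyNormalSpace M] {e : X → M}
    (he : IsEmbedding e) {f : X → Y} {A : Set X} (hf : ContinuousOn f A) {W : ι → Set Y}
    (hW : ∀ i, IsOpen (W i)) (hA : MapsTo f A (⋃ i, W i))
    (h : ∀ i, IsGδ (e '' (A ∩ f ⁻¹' layer W i))) : IsGδ (e '' A) := by
  have hO : ∀ i, ∃ O, IsOpen O ∧ A ∩ e ⁻¹' O = A ∩ f ⁻¹' W i := fun i => by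
    obtain ⟨Q, hQ, hQA⟩ := continuousOn_iff'.1 hf _ (hW i)
    obtain ⟨O, hO, rfl⟩ := he.isInducing.isOpen_iff.1 hQ
    exact ⟨O, hO, by rw [inter_comm, ← hQA, inter_comm]⟩
  choose O hO hOA using hO
  have hlayer : ∀ i, e '' A ∩ layer O i = e '' (A ∩ f ⁻¹' layer W i) := fun i => by
    rw [← image_inter_preimage, preimage_layer, inter_layer_congr hOA, preimage_layer]
  have hcover : e '' A ∩ ⋃ i, O i = e '' A := by
    refine inter_eq_left.2 (image_subset_iff.2 fun x hx => ?_)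
    obtain ⟨i, hi⟩ := mem_iUnion.1 (hA hx)
    exact mem_iUnion.2 ⟨i, ((hOA i).superset ⟨hx, hi⟩).2⟩
  rw [← hcover]
  exact isGδ_inter_iUnion_of_isGδ_inter_layer hO fun i => hlayer i ▸ h i

theorem ContinuousOn.isGδ_inter_preimage {f : X → Y} {s : Set X} {t : Set Y}
    (hf : ContinuousOn f s) (hs : IsGδ s) (ht : IsGδ t) : IsGδ (s ∩ f ⁻¹' t) := by
  obtain ⟨u, hu, rfl⟩ := isGδ_iff_eq_iInter_nat.1 ht
  choose O hO hOs using fun n => continuousOn_iff'.1 hf _ (hu n)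
  have : s ∩ f ⁻¹' ⋂ n, u n = s ∩ ⋂ n, O n := by
    ext x
    simp only [mem_inter_iff, mem_preimage, mem_iInter]
    refine and_congr_right fun hx => forall_congr' fun n => ?_
    exact ⟨fun h => ((hOs n).subset ⟨h, hx⟩).1, fun h => ((hOs n).superset ⟨h, hx⟩).1⟩
  rw [this]
  exact hs.inter (.iInter_of_isOpen hO)

theorem IsGδ.polishSpace [PolishSpace X] {s : Set X} (hs : IsGδ s) : PolishSpace s := by
  obtain ⟨u, hu, rfl⟩ := isGδ_iff_eq_iInter_nat.1 hs
  have : ∀ n, PolishSpace (u n) := fun n => (hu n).polishSpace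
  let φ : (⋂ n, u n : Set X) → ∀ n, u n := fun x n => ⟨x, mem_iInter.1 x.2 n⟩
  have hφ : IsEmbedding φ := .of_comp (continuous_pi fun n => continuous_subtype_val.subtype_mk _)
    (continuous_apply 0).subtype_val IsEmbedding.subtypeVal
  have hrange : range φ = ⋂ n, {z | (z n : X) = z 0} := by
    ext z
    simp only [mem_range, mem_iInter, mem_ofPred_eq]
    refine ⟨by rintro ⟨x, rfl⟩ n; rfl, fun h => ?_⟩
    exact ⟨⟨z 0, mem_iInter.2 fun n => h n ▸ (z n).2⟩, funext fun n => Subtype.ext (h n).symm⟩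
  refine (IsClosedEmbedding.mk hφ ?_).polishSpace
  rw [hrange]
  exact isClosed_iInter fun n =>
    isClosed_eq (continuous_apply n).subtype_val (continuous_apply 0).subtype_val

theorem Topology.IsEmbedding.isGδ_range [IsCompletelyMetrizableSpace X] [PerfectlyNormalSpace M]
    [T2Space M] {φ : X → M} (hφ : IsEmbedding φ) : IsGδ (range φ) := by
  let := upgradeIsCompletelyMetrizable X
  let T : ℕ → Set M := fun n =>
    ⋃₀ {O | IsOpen O ∧ ∀ a b, φ a ∈ O → φ b ∈ O → dist a b < 1 / (n + 1)}
  suffices range φ = closure (range φ) ∩ ⋂ n, T n by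
    rw [this]
    exact isClosed_closure.isGδ.inter (.iInter_of_isOpen fun n => isOpen_sUnion fun O hO => hO.1)
  refine subset_antisymm ?_ fun x ⟨hxcl, hxT⟩ => ?_
  · rintro _ ⟨q, rfl⟩
    refine ⟨subset_closure (mem_range_self q), mem_iInter.2 fun n => ?_⟩
    obtain ⟨O, hO, hOq⟩ := hφ.isInducing.isOpen_iff.1 (Metric.isOpen_ball (x := q)
      (ε := 1 / (n + 1) / 2))
    refine ⟨O, ⟨hO, fun a b ha hb => ?_⟩, ?_⟩
    · have ha' : dist a q < 1 / (n + 1) / 2 := by rw [← Metric.mem_ball, ← hOq]; exact ha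
      have hb' : dist b q < 1 / (n + 1) / 2 := by rw [← Metric.mem_ball, ← hOq]; exact hb
      linarith [dist_triangle_right a b q]
    · rw [← mem_preimage, hOq]
      exact Metric.mem_ball_self (by positivity)
  -- the trace of `𝓝 x` on `X` is Cauchy, and its limit is sent to `x`
  have : (comap φ (𝓝 x)).NeBot := comap_neBot_iff.2 fun t ht => by
    obtain ⟨_, hyt, a, rfl⟩ := mem_closure_iff_nhds.1 hxcl t ht
    exact ⟨a, hyt⟩
  have hcauchy : Cauchy (comap φ (𝓝 x)) := Metric.cauchy_iff.2 ⟨this, fun ε hε => by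
    obtain ⟨n, hn⟩ := exists_nat_one_div_lt hε
    obtain ⟨O, ⟨hO, hOd⟩, hxO⟩ := mem_sUnion.1 (mem_iInter.1 hxT n)
    exact ⟨φ ⁻¹' O, preimage_mem_comap (hO.mem_nhds hxO),
      fun a ha b hb => (hOd a b ha hb).trans hn⟩⟩
  obtain ⟨p, hp⟩ := CompleteSpace.complete hcauchy
  exact ⟨p, tendsto_nhds_unique ((hφ.continuous.tendsto p).mono_left hp) tendsto_comap⟩

theorem isEmbedding_domRestrict_of_leftInvOn {f : X → Y} {g : Y → X} {s : Set Y}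
    (hg : ContinuousOn g s) (hf : ContinuousOn f (g '' s)) (hfg : LeftInvOn f g s) :
    IsEmbedding (s.domRestrict g) := by
  have hψ : IsEmbedding ((mapsTo_image g s).restrict g s (g '' s)) :=
    .of_comp (hg.mapsToRestrict _) hf.domRestrict <| by
      convert IsEmbedding.subtypeVal
      funext y
      exact hfg y.2
  exact IsEmbedding.subtypeVal.comp hψ

end GDelta

theorem exists_isOpen_layers_eq_univ (Z : Type u) [TopologicalSpace Z]
    [SecondCountableTopology Z] (P : Set Z → Prop) (hP₀ : P ∅)
    (hP : ∀ A : Set Z, A.Nonempty → ∃ W, IsOpen W ∧ (A ∩ W).Nonempty ∧ P (A ∩ W)) :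
    ∃ W : Ordinal.{u} → Set Z, (∀ o, IsOpen (W o)) ∧ ⋃ o, W o = univ ∧ ∀ o, P (layer W o) := by
  classical
  choose! χ hχ_open hχ_ne hχ_P using hP
  let next : Set Z → Set Z := fun A => if A.Nonempty then χ A else ∅
  let W : Ordinal.{u} → Set Z :=
    wellFounded_lt.fix fun o ih => next (⋃ (o' : Ordinal) (h : o' < o), ih o' h)ᶜ
  have hW : ∀ o, W o = if (⋃ o' < o, W o')ᶜ.Nonempty then χ (⋃ o' < o, W o')ᶜ else ∅ :=
    wellFounded_lt.fix_eq _
  have hlayer : ∀ o, layer W o = (⋃ o' < o, W o')ᶜ ∩ W o := fun o => by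
    rw [layer, sdiff_eq, inter_comm]
  have hW_open : ∀ o, IsOpen (W o) := fun o => by
    rw [hW]
    split_ifs with h
    exacts [hχ_open _ h, isOpen_empty]
  refine ⟨W, hW_open, ?_, fun o => ?_⟩
  · -- otherwise every ordinal has a nonempty layer, and there are only countably many of those
    by_contra hW_univ
    obtain ⟨x, hx⟩ := (ne_univ_iff_exists_notMem _).1 hW_univ
    have hrem : ∀ o, (⋃ o' < o, W o')ᶜ.Nonempty := fun o =>
      ⟨x, fun hxo => hx (iUnion₂_subset_iUnion _ _ hxo)⟩
    have hall : {o | (layer W o).Nonempty} = univ := eq_univ_of_forall fun o => by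
      rw [mem_ofPred_eq, hlayer, hW, if_pos (hrem o)]
      exact hχ_ne _ (hrem o)
    have : Countable Ordinal.{u} :=
      countable_univ_iff.1 (hall ▸ countable_setOf_nonempty_layer hW_open)
    exact not_small_ordinal.{u} (Countable.toSmall _)
  · rw [hlayer]
    by_cases h : (⋃ o' < o, W o')ᶜ.Nonempty
    · rw [hW, if_pos h]
      exact hχ_P _ h
    · rw [not_nonempty_iff_eq_empty.1 h, empty_inter]
      exact hP₀

theorem Continuous.weaklyDiscontinuous {X Y : Type*} [TopologicalSpace X] [TopologicalSpace Y]
    {f : X → Y} (hf : Continuous f) : WeaklyDiscontinuous f := fun A hA =>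
  ⟨A, subset_rfl, hA, ⟨univ, isOpen_univ, (inter_univ A).symm⟩, hf.continuousOn⟩

theorem Homeomorph.weaklyHomeomorphic {X Y : Type*} [TopologicalSpace X] [TopologicalSpace Y]
    (h : X ≃ₜ Y) : WeaklyHomeomorphic X Y :=
  ⟨h, h.symm, h.left_inv, h.right_inv, h.continuous.weaklyDiscontinuous,
    h.symm.continuous.weaklyDiscontinuous⟩

namespace WeaklyDiscontinuous

variable {X Y : Type*} [TopologicalSpace X] [TopologicalSpace Y]

theorem exists_isOpen {f : X → Y} (hf : WeaklyDiscontinuous f) {A : Set X} (hA : A.Nonempty) :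
    ∃ W, IsOpen W ∧ (A ∩ W).Nonempty ∧ ContinuousOn f (A ∩ W) := by
  obtain ⟨-, -, hne, ⟨W, hW, rfl⟩, hcont⟩ := hf A hA
  exact ⟨W, hW, hne, hcont⟩

theorem exists_isOpen_continuousOn_image {f : X → Y} {g : Y → X} (hf : WeaklyDiscontinuous f)
    (hg : WeaklyDiscontinuous g) {B : Set Y} (hB : B.Nonempty) :
    ∃ W, IsOpen W ∧ (B ∩ W).Nonempty ∧ ContinuousOn g (B ∩ W) ∧
      ContinuousOn f (g '' (B ∩ W)) := by
  obtain ⟨W₁, hW₁, hne₁, hg₁⟩ := hg.exists_isOpen hB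
  obtain ⟨O, hO, hneO, hfO⟩ := hf.exists_isOpen (hne₁.image g)
  obtain ⟨O', hO', hO'eq⟩ := continuousOn_iff'.1 hg₁ O hO
  have hpre : B ∩ (W₁ ∩ O') = B ∩ W₁ ∩ g ⁻¹' O := by
    rw [← inter_assoc, inter_comm _ O', ← hO'eq, inter_comm]
  refine ⟨W₁ ∩ O', hW₁.inter hO', ?_, ?_, ?_⟩ <;> rw [hpre]
  · obtain ⟨_, ⟨y, hy, rfl⟩, hyO⟩ := hneO
    exact ⟨y, hy, hyO⟩
  · exact hg₁.mono inter_subset_left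
  · rwa [image_inter_preimage]

theorem isSeparable_range {Y : Type u} [TopologicalSpace Y] [SecondCountableTopology Y]
    {g : Y → X} (hg : WeaklyDiscontinuous g) : IsSeparable (range g) := by
  obtain ⟨W, hW_open, hW_univ, hWg⟩ := exists_isOpen_layers_eq_univ Y (ContinuousOn g)
    (continuousOn_empty g) fun A hA => hg.exists_isOpen hA
  have := (countable_setOf_nonempty_layer hW_open).to_subtype
  refine (IsSeparable.iUnion (s := fun o : {o | (layer W o).Nonempty} => g '' layer W o)
    fun o => ?_).mono ?_
  · rw [← range_domRestrict]
    exact TopologicalSpace.isSeparable_range (hWg o).domRestrict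
  · rintro _ ⟨y, rfl⟩
    obtain ⟨o, ho⟩ := mem_iUnion.1 ((iUnion_layer W).trans hW_univ ▸ mem_univ y)
    exact mem_iUnion.2 ⟨⟨o, y, ho⟩, mem_image_of_mem g ho⟩

end WeaklyDiscontinuous

theorem isGδ_range_of_weaklyDiscontinuous {X Y M : Type*} [TopologicalSpace X]
    [SecondCountableTopology X] [PerfectlyNormalSpace X] [TopologicalSpace Y] [PolishSpace Y]
    [TopologicalSpace M] [SecondCountableTopology M] [PerfectlyNormalSpace M] [T2Space M]
    {e : X → M} (he : IsEmbedding e) (σ : X ≃ Y) (hσ : WeaklyDiscontinuous σ)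
    (hσ' : WeaklyDiscontinuous σ.symm) : IsGδ (range e) := by
  obtain ⟨V, hV_open, hV_univ, hV⟩ := exists_isOpen_layers_eq_univ Y
    (fun L => ContinuousOn σ.symm L ∧ ContinuousOn σ (σ.symm '' L))
    ⟨continuousOn_empty _, by simp⟩ fun B hB => hσ.exists_isOpen_continuousOn_image hσ' hB
  obtain ⟨W, hW_open, hW_univ, hW⟩ := exists_isOpen_layers_eq_univ X (ContinuousOn σ)
    (continuousOn_empty _) fun A hA => hσ.exists_isOpen hA
  rw [← image_univ]
  refine isGδ_image_of_isGδ_image_inter_preimage_layer he continuousOn_id hW_open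
    (fun x _ => hW_univ ▸ mem_univ x) fun α => ?_
  rw [univ_inter, preimage_id]
  refine isGδ_image_of_isGδ_image_inter_preimage_layer he (hW α) hV_open
    (fun x _ => hV_univ ▸ mem_univ (σ x)) fun β => ?_
  -- the piece is the image of a Gδ subset of `Y` on which `σ.symm` is an embedding
  set S : Set Y := layer V β ∩ σ.symm ⁻¹' layer W α
  have hpiece : layer W α ∩ σ ⁻¹' layer V β = σ.symm '' S := by
    rw [image_inter_preimage, σ.image_symm_eq_preimage, inter_comm]
  have : PolishSpace S :=
    ((hV β).1.isGδ_inter_preimage (isGδ_layer hV_open β) (isGδ_layer hW_open α)).polishSpace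
  have hemb := he.comp <| isEmbedding_domRestrict_of_leftInvOn (s := S)
    ((hV β).1.mono inter_subset_left) ((hV β).2.mono (image_mono inter_subset_left))
    (σ.rightInverse_symm.leftInvOn _)
  rw [hpiece, image_image, image_eq_range]
  exact hemb.isGδ_range

theorem WeaklyHomeomorphic.polishSpace {X Y : Type*} [TopologicalSpace X] [MetrizableSpace X]
    [TopologicalSpace Y] [PolishSpace Y] (h : WeaklyHomeomorphic X Y) : PolishSpace X := by
  obtain ⟨f, g, hgf, hfg, hf, hg⟩ := h
  let σ : X ≃ Y := ⟨f, g, hgf, hfg⟩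
  have : SeparableSpace X := isSeparable_univ_iff.1 (σ.symm.range_eq_univ ▸ hg.isSeparable_range)
  let := metrizableSpaceMetric X
  have : SeparableSpace (UniformSpace.Completion X) :=
    UniformSpace.Completion.denseRange_coe.separableSpace (UniformSpace.Completion.continuous_coe X)
  have he : IsEmbedding ((↑) : X → UniformSpace.Completion X) :=
    UniformSpace.Completion.coe_isometry.isEmbedding
  have := (isGδ_range_of_weaklyDiscontinuous he σ hf hg).polishSpace
  exact he.toHomeomorph.isClosedEmbedding.polishSpace

theorem polish_iff_weaklyHomeomorphic_to_polish
    {X : Type u} [TopologicalSpace X] [TopologicalSpace.MetrizableSpace X] :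
    PolishSpace X ↔
      ∃ (Y : Type u) (tY : TopologicalSpace Y), PolishSpace Y ∧ WeaklyHomeomorphic X Y :=
  ⟨fun hX => ⟨X, _, hX, (Homeomorph.refl X).weaklyHomeomorphic⟩,
    fun ⟨_, _, _, h⟩ => h.polishSpace⟩
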